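/- arXiv:1310.1775 — 2 statements merged into one kernel-verified Lean document; each statement's English description precedes it below -/
import Mathlib

section
/- Let H be a proper subgroup of a finite group G and let N be a normal subgroup of G such that HN = G. Then the union over all g ∈ G of the conjugates (H ∩ N)^g is a proper subset of N. -/
open scoped Pointwise

/-- The normal covering number `γ(G)`: the smallest `k` such that there are `k` proper
subgroups of `G` whose conjugates cover `G`; it is `⊤` (infinity) if no such `k` exists
(e.g. when `G` is cyclic). -/
noncomputable def normalCoveringNumber (G : Type*) [Group G] : ℕ∞ :=
  sInf {n : ℕ∞ | ∃ k : ℕ, n = (k : ℕ∞) ∧ ∃ H : Fin k → Subgroup G,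
    (∀ i, H i ≠ ⊤) ∧ ∀ g : G, ∃ i, ∃ x : G, x * g * x⁻¹ ∈ H i}

/-- The covering number `σ(G)`: the smallest number of proper subgroups of `G` whose
union is `G`; it is `⊤` (infinity) if no such number exists (e.g. when `G` is cyclic). -/
noncomputable def coveringNumber (G : Type*) [Group G] : ℕ∞ :=
  sInf {n : ℕ∞ | ∃ k : ℕ, n = (k : ℕ∞) ∧ ∃ H : Fin k → Subgroup G,
    (∀ i, H i ≠ ⊤) ∧ ∀ g : G, ∃ i, g ∈ H i}

/-- `μ(G)`: the least integer `k` such that `G` has more than one maximal subgroup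
of index `k`. -/
noncomputable def muIndex (G : Type*) [Group G] : ℕ :=
  sInf {k : ℕ | ∃ H K : Subgroup G, IsCoatom H ∧ IsCoatom K ∧ H ≠ K ∧
    H.index = k ∧ K.index = k}

/-- `m(S)`: the smallest index of a proper subgroup of `S`. -/
noncomputable def minIndex (S : Type*) [Group S] : ℕ :=
  sInf {n : ℕ | ∃ H : Subgroup S, H ≠ ⊤ ∧ H.index = n}

/-! Since `HN = G`, every `G`-conjugate of `H ∩ N` is already an `N`-conjugate, and `H ∩ N` is
proper in `N` because `N ≤ H` would force `H = HN = G`. So it suffices that a proper subgroup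
of a finite group misses some conjugacy class: this is Jordan's lemma for the transitive action
on its cosets. -/

open MulAction in
/-- Jordan's lemma. With one orbit, Burnside makes the fixed-point counts sum to `|G|`; if each
were at least one, the identity's count `|X| ≥ 2` would push the sum above `|G|`. -/
theorem MulAction.exists_forall_smul_ne {G X : Type*} [Group G] [MulAction G X] [Finite G]
    [Finite X] [Nontrivial X] [IsPretransitive G X] : ∃ g : G, ∀ x : X, g • x ≠ x := by
  classical
  have := Fintype.ofFinite G
  have := Fintype.ofFinite X
  by_contra! hfix
  have hone : Fintype.card (orbitRel.Quotient G X) = 1 := by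
    have := (pretransitive_iff_subsingleton_quotient G X).mp inferInstance
    obtain ⟨x⟩ := ‹Nontrivial X›.to_nonempty
    exact Fintype.card_eq_one_iff.mpr ⟨Quotient.mk'' x, fun _ ↦ Subsingleton.elim _ _⟩
  have burnside := sum_card_fixedBy_eq_card_orbits_mul_card_group G X
  rw [hone, one_mul] at burnside
  have key : ∑ _g : G, 1 < ∑ g : G, Fintype.card (fixedBy X g) := by
    refine Finset.sum_lt_sum (fun g _ ↦ Fintype.card_pos_iff.mpr ?_) ⟨1, Finset.mem_univ _, ?_⟩
    · obtain ⟨x, hx⟩ := hfix g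
      exact ⟨⟨x, hx⟩⟩
    · simpa [Fintype.card_subtype, fixedBy] using Fintype.one_lt_card
  rw [burnside, Finset.sum_const, Finset.card_univ, smul_eq_mul, mul_one] at key
  exact lt_irrefl _ key

namespace Subgroup

variable {G : Type*} [Group G]

theorem exists_forall_conj_notMem [Finite G] {K : Subgroup G} (hK : K ≠ ⊤) :
    ∃ y : G, ∀ x : G, x⁻¹ * y * x ∉ K := by
  have : Nontrivial (G ⧸ K) := QuotientGroup.nontrivial_iff.mpr hK
  obtain ⟨y, hy⟩ := MulAction.exists_forall_smul_ne (G := G) (X := G ⧸ K)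
  refine ⟨y, fun x hx ↦ hy x ?_⟩
  rw [MulAction.Quotient.smul_mk, QuotientGroup.eq]
  simpa [mul_assoc] using K.inv_mem hx

theorem eq_top_of_mul_eq_univ_of_le {H N : Subgroup G}
    (hHN : (H : Set G) * (N : Set G) = Set.univ) (hle : N ≤ H) : H = ⊤ := by
  refine eq_top_iff.mpr fun g _ ↦ ?_
  obtain ⟨h, hh, n, hn, rfl⟩ : g ∈ (H : Set G) * (N : Set G) := hHN ▸ Set.mem_univ g
  exact H.mul_mem hh (hle hn)

theorem exists_conj_eq_of_mul_eq_univ {H N : Subgroup G} (hN : N.Normal)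
    (hHN : (H : Set G) * (N : Set G) = Set.univ) (g : G) {k : G} (hk : k ∈ H ⊓ N) :
    ∃ n ∈ N, ∃ k' ∈ H ⊓ N, g⁻¹ * k * g = n⁻¹ * k' * n := by
  obtain ⟨h, hh, n, hn, rfl⟩ : g ∈ (H : Set G) * (N : Set G) := hHN ▸ Set.mem_univ g
  refine ⟨n, hn, h⁻¹ * k * h, ⟨?_, ?_⟩, by group⟩
  · exact H.mul_mem (H.mul_mem (H.inv_mem hh) hk.1) hh
  · simpa using hN.conj_mem k hk.2 h⁻¹

end Subgroup

/-- If `H` is a proper subgroup of a finite group `G` and `N ⊴ G` with `HN = G`, then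
the union of the conjugates of `H ∩ N` is a proper subset of `N`. -/
theorem union_conj_inf_ssubset (G : Type*) [Group G] [Finite G]
    (H N : Subgroup G) (hH : H ≠ ⊤) (hN : N.Normal)
    (hHN : (H : Set G) * (N : Set G) = Set.univ) :
    (⋃ g : G, (fun x => g⁻¹ * x * g) '' ((H ⊓ N : Subgroup G) : Set G)) ⊂ (N : Set G) := by
  have hsub : (⋃ g : G, (fun x => g⁻¹ * x * g) '' ((H ⊓ N : Subgroup G) : Set G)) ⊆ N :=
    Set.iUnion_subset fun g ↦ Set.image_subset_iff.mpr fun k hk ↦ by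
      simpa using hN.conj_mem k hk.2 g⁻¹
  have hK : (H ⊓ N).subgroupOf N ≠ ⊤ := fun htop ↦ hH <|
    Subgroup.eq_top_of_mul_eq_univ_of_le hHN (le_inf_iff.mp (Subgroup.subgroupOf_eq_top.mp htop)).1
  obtain ⟨y, hy⟩ := Subgroup.exists_forall_conj_notMem hK
  refine ⟨hsub, fun hNsub ↦ ?_⟩
  obtain ⟨g, k, hk, hgk⟩ := Set.mem_iUnion.mp (hNsub y.2)
  obtain ⟨n, hn, k', hk', hconj⟩ := Subgroup.exists_conj_eq_of_mul_eq_univ hN hHN g hk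
  refine hy ⟨n, hn⟩⁻¹ (Subgroup.mem_subgroupOf.mpr ?_)
  have hy' : (y : G) = n⁻¹ * k' * n := hgk ▸ hconj
  simpa [hy', mul_assoc] using hk'
end

section
/- Let M be a finite elementary abelian group and let K be an almost-transitive irreducible subgroup of Aut(M). Then the semidirect product G = M ⋊ K satisfies γ(G) = 2. -/
open scoped Pointwise

/-! A finite group is never the union of the conjugates of a proper subgroup
(Jordan), so `γ(G) ≥ 2`. For `G = M ⋊ K`, take a proper subgroup `T < K` witnessing
almost-transitivity: an element `m k` with `k` fixing some `m₀ ≠ 1` is conjugate into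
`M ⋊ T`, while if `k` is fixed-point-free then `z ↦ z (k z)⁻¹` is a bijection of `M`, so
`m k` is `M`-conjugate into the complement `K`. Hence `γ(G) ≤ 2`. -/

theorem MulAction.exists_fixedBy_eq_empty (G X : Type*) [Group G] [MulAction G X] [Finite G]
    [Finite X] [IsPretransitive G X] [Nontrivial X] : ∃ g : G, fixedBy X g = ∅ := by
  classical
  cases nonempty_fintype G
  cases nonempty_fintype X
  by_contra! hfix
  have hone_orbit : Fintype.card (orbitRel.Quotient G X) = 1 :=
    Fintype.card_eq_one_iff_nonempty_unique.mpr
      ⟨@Unique.mk' _ ⟨Quotient.mk _ (Classical.arbitrary X)⟩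
        ((pretransitive_iff_subsingleton_quotient G X).mp inferInstance)⟩
  -- Burnside: with one orbit the fixed-point counts sum to `|G|`, yet each is at least `1`
  -- and the identity's is `|X| ≥ 2`.
  have hburnside := sum_card_fixedBy_eq_card_orbits_mul_card_group G X
  rw [hone_orbit, one_mul] at hburnside
  have hlt : ∑ _g : G, 1 < ∑ g : G, Fintype.card (fixedBy X g) := by
    refine Finset.sum_lt_sum (fun g _ => Fintype.card_pos_iff.mpr (hfix g).to_subtype)
      ⟨1, Finset.mem_univ _, ?_⟩
    rw [Fintype.card_congr (Equiv.setCongr (fixedBy_one_eq_univ X G)), Fintype.card_setUniv]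
    exact Fintype.one_lt_card
  rw [Finset.sum_const, Finset.card_univ, smul_eq_mul, mul_one, hburnside] at hlt
  exact hlt.false

theorem Subgroup.exists_forall_conj_notMem_s16 {G : Type*} [Group G] [Finite G] {H : Subgroup G}
    (hH : H ≠ ⊤) : ∃ g : G, ∀ x : G, x * g * x⁻¹ ∉ H := by
  have : Nontrivial (G ⧸ H) := QuotientGroup.nontrivial_iff.mpr hH
  obtain ⟨g, hg⟩ := MulAction.exists_fixedBy_eq_empty G (G ⧸ H)
  refine ⟨g, fun x hx => ?_⟩
  have hfixed : ((x⁻¹ : G) : G ⧸ H) ∈ MulAction.fixedBy (G ⧸ H) g := by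
    change ((g * x⁻¹ : G) : G ⧸ H) = (x⁻¹ : G)
    rw [QuotientGroup.eq]
    simpa [mul_assoc] using H.inv_mem hx
  simp [hg] at hfixed

section NormalCoveringNumber

variable {G : Type*} [Group G]

theorem two_le_normalCoveringNumber [Finite G] : 2 ≤ normalCoveringNumber G := by
  refine le_sInf ?_
  rintro _ ⟨k, rfl, H, hH, hcover⟩
  by_contra! hk
  obtain rfl | rfl : k = 0 ∨ k = 1 := by
    have : k < 2 := by exact_mod_cast hk
    omega
  · exact (hcover 1).choose.elim0
  · obtain ⟨g, hg⟩ := Subgroup.exists_forall_conj_notMem_s16 (hH 0)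
    obtain ⟨i, x, hx⟩ := hcover g
    exact hg x (Subsingleton.elim i 0 ▸ hx)

theorem normalCoveringNumber_le_two {H₁ H₂ : Subgroup G} (h₁ : H₁ ≠ ⊤) (h₂ : H₂ ≠ ⊤)
    (hcover : ∀ g : G, ∃ x : G, x * g * x⁻¹ ∈ H₁ ∨ x * g * x⁻¹ ∈ H₂) :
    normalCoveringNumber G ≤ 2 := by
  refine sInf_le ⟨2, rfl, ![H₁, H₂], fun i => by fin_cases i <;> assumption, fun g => ?_⟩
  obtain ⟨x, hx | hx⟩ := hcover g
  exacts [⟨0, x, hx⟩, ⟨1, x, hx⟩]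

end NormalCoveringNumber

namespace SemidirectProduct

variable {N G : Type*} [Group N] [Group G] {φ : G →* MulAut N}

instance [Finite N] [Finite G] : Finite (N ⋊[φ] G) :=
  Finite.of_equiv _ equivProd.symm

theorem range_inr_ne_top [Nontrivial N] : (inr : G →* N ⋊[φ] G).range ≠ ⊤ := by
  obtain ⟨n, hn⟩ := exists_ne (1 : N)
  intro htop
  obtain ⟨k, hk⟩ := (htop ▸ Subgroup.mem_top (inl n) : inl n ∈ (inr : G →* N ⋊[φ] G).range)
  exact hn (congrArg left hk).symm

theorem comap_rightHom_ne_top {T : Subgroup G} (hT : T ≠ ⊤) :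
    T.comap (rightHom : N ⋊[φ] G →* G) ≠ ⊤ := by
  rw [← Subgroup.comap_top rightHom]
  exact (Subgroup.comap_injective rightHom_surjective).ne hT

/-- Solving `z n (φ k z)⁻¹ = 1` for `z` is possible exactly because the commutator map of a
fixed-point-free automorphism of a finite group is onto. -/
theorem exists_conj_mem_range_inr [Finite N] (g : N ⋊[φ] G)
    (hg : MonoidHom.FixedPointFree (φ g.right)) :
    ∃ x : N ⋊[φ] G, x * g * x⁻¹ ∈ (inr : G →* N ⋊[φ] G).range := by
  obtain ⟨w, hw⟩ := hg.commutatorMap_surjective g.left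
  refine ⟨inl w⁻¹, g.right, SemidirectProduct.ext ?_ ?_⟩
  · simp [← hw, mul_assoc]
  · simp

theorem normalCoveringNumber_eq_two [Finite N] [Nontrivial N] [Finite G] {T : Subgroup G}
    (hT : T ≠ ⊤)
    (hconj : ∀ k : G, ¬ MonoidHom.FixedPointFree (φ k) → ∃ x : G, x * k * x⁻¹ ∈ T) :
    normalCoveringNumber (N ⋊[φ] G) = 2 := by
  refine le_antisymm (normalCoveringNumber_le_two (comap_rightHom_ne_top hT) range_inr_ne_top
    fun g => ?_) two_le_normalCoveringNumber
  by_cases hg : MonoidHom.FixedPointFree (φ g.right)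
  · obtain ⟨x, hx⟩ := exists_conj_mem_range_inr g hg
    exact ⟨x, Or.inr hx⟩
  · obtain ⟨x, hx⟩ := hconj g.right hg
    exact ⟨inr x, Or.inl (by simpa using hx)⟩

end SemidirectProduct

theorem gamma_semidirect_almost_transitive_general (M : Type*) [CommGroup M] [Finite M]
    [Nontrivial M]
    (K : Subgroup (MulAut M))
    (halm : ∃ T : Subgroup (MulAut M), T ≤ K ∧ T ≠ K ∧
      ∀ k ∈ K, (∃ m : M, m ≠ 1 ∧ k m = m) → ∃ x ∈ K, x * k * x⁻¹ ∈ T) :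
    normalCoveringNumber (M ⋊[K.subtype] ↥K) = 2 := by
  obtain ⟨T, hTK, hTne, hT⟩ := halm
  refine SemidirectProduct.normalCoveringNumber_eq_two (T := T.subgroupOf K)
    (fun htop => hTne (le_antisymm hTK (Subgroup.subgroupOf_eq_top.mp htop))) fun k hk => ?_
  have hfixed : ∃ m : M, m ≠ 1 ∧ (k : MulAut M) m = m := by
    by_contra! hfree
    exact hk fun m hm => by_contra fun hm_ne => hfree m hm_ne hm
  obtain ⟨x, hxK, hx⟩ := hT k k.2 hfixed
  exact ⟨⟨x, hxK⟩, Subgroup.mem_subgroupOf.mpr hx⟩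

/-- If `M` is a finite elementary abelian group and `K ≤ Aut(M)` is an almost-transitive
irreducible subgroup, then `γ(M ⋊ K) = 2`. -/
theorem gamma_semidirect_almost_transitive (M : Type*) [CommGroup M] [Finite M]
    [Nontrivial M] (p : ℕ) (hp : Nat.Prime p) (helem : ∀ x : M, x ^ p = 1)
    (K : Subgroup (MulAut M))
    (hirr : ∀ N : Subgroup M, (∀ k ∈ K, ∀ n ∈ N, k n ∈ N) → N = ⊥ ∨ N = ⊤)
    (halm : ∃ T : Subgroup (MulAut M), T ≤ K ∧ T ≠ K ∧
      ∀ k ∈ K, (∃ m : M, m ≠ 1 ∧ k m = m) → ∃ x ∈ K, x * k * x⁻¹ ∈ T) :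
    normalCoveringNumber (M ⋊[K.subtype] ↥K) = 2 :=
  gamma_semidirect_almost_transitive_general M K halm
end
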